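/- arXiv:1710.04627 — 2 statements merged into one kernel-verified Lean document; each statement's English description precedes it below -/
import Mathlib

section
/- Let K be the NEC-type presented group with presentation ⟨x₁,…,x_γ, e, τ₁,…,τ_{r+1} ∣ x₁² = ⋯ = x_γ² = τ₁² = ⋯ = τ_{r+1}² = 1, e⁻¹τ_{r+1}e = τ₁, x_γ⋯x₂x₁e = 1, (τ₁τ₂)^{n₁} = ⋯ = (τ_rτ_{r+1})^{n_r} = 1⟩, let θ : K → C₂ be the homomorphism sending each x_j and each τ_k to a and e to 1, and set δ_j = τ₁x_j (1 ≤ j ≤ γ), c_k = τ₁τ_{k+1} (1 ≤ k ≤ r), e₁ = e, e₂ = τ₁eτ₁. Then the kernel Δ̂ = ker θ is generated (as a subgroup of K) by the set {δ₁,…,δ_γ, c₁,…,c_r, e₁, e₂}. -/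
/-- Generators of the NEC-type group: `x 0, …, x (γ-1)` (the `x₁,…,x_γ` of the paper),
`e`, and `τ 0, …, τ r` (the reflections `τ₁,…,τ_{r+1}` of the paper). -/
inductive NECGen (γ r : ℕ) : Type
  | x : Fin γ → NECGen γ r
  | e : NECGen γ r
  | τ : Fin (r + 1) → NECGen γ r

/-- The defining relators of the NEC-type group:
`xⱼ² = τₖ² = 1`, `e⁻¹ τ_{r+1} e τ₁⁻¹ = 1`, `x_γ ⋯ x₂ x₁ e = 1`, `(τₖ τ_{k+1})^{nₖ} = 1`. -/
def necRels (γ r : ℕ) (n : Fin r → ℕ) : Set (FreeGroup (NECGen γ r)) :=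
  (Set.range fun j : Fin γ => (FreeGroup.of (NECGen.x j)) ^ 2) ∪
  (Set.range fun k : Fin (r + 1) => (FreeGroup.of (NECGen.τ k)) ^ 2) ∪
  {(FreeGroup.of (NECGen.e : NECGen γ r))⁻¹ * FreeGroup.of (NECGen.τ (Fin.last r)) *
      FreeGroup.of (NECGen.e : NECGen γ r) * (FreeGroup.of (NECGen.τ (0 : Fin (r + 1))))⁻¹} ∪
  {(List.ofFn fun j : Fin γ => FreeGroup.of (NECGen.x j.rev)).prod *
      FreeGroup.of (NECGen.e : NECGen γ r)} ∪
  (Set.range fun k : Fin r =>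
    (FreeGroup.of (NECGen.τ k.castSucc) * FreeGroup.of (NECGen.τ k.succ)) ^ n k)

/-- The NEC-type presented group `K` with signature `(0; +; [2,…,2], {(n₁,…,n_r)})`. -/
abbrev NECGroup (γ r : ℕ) (n : Fin r → ℕ) := PresentedGroup (necRels γ r n)

/-- The generator `x_{j+1}` of `K` (0-indexed). -/
def Kx {γ r : ℕ} {n : Fin r → ℕ} (j : Fin γ) : NECGroup γ r n :=
  PresentedGroup.of (NECGen.x j)

/-- The generator `e` of `K`. -/
def Ke {γ r : ℕ} {n : Fin r → ℕ} : NECGroup γ r n :=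
  PresentedGroup.of NECGen.e

/-- The generator (reflection) `τ_{k+1}` of `K` (0-indexed). -/
def Kτ {γ r : ℕ} {n : Fin r → ℕ} (k : Fin (r + 1)) : NECGroup γ r n :=
  PresentedGroup.of (NECGen.τ k)

/-- The cyclic group `C₂` of order two. -/
abbrev C₂ := Multiplicative (ZMod 2)

/-- The nontrivial element `a` of `C₂`. -/
def C₂a : C₂ := Multiplicative.ofAdd 1

section Aux

variable {γ r : ℕ} {n : Fin r → ℕ}

lemma necRel_eq_one {w : FreeGroup (NECGen γ r)} (hw : w ∈ necRels γ r n) :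
    PresentedGroup.mk (necRels γ r n) w = 1 :=
  (QuotientGroup.eq_one_iff w).mpr (Subgroup.subset_normalClosure hw)

lemma Kτ_sq (k : Fin (r + 1)) : Kτ (γ := γ) (n := n) k * Kτ (γ := γ) (n := n) k = 1 := by
  have : PresentedGroup.mk (necRels γ r n) ((FreeGroup.of (NECGen.τ k)) ^ 2) = 1 :=
    necRel_eq_one (by left; left; left; right; exact ⟨k, rfl⟩)
  simpa [Kτ, PresentedGroup.of, pow_two, map_mul] using this

lemma Kx_sq (j : Fin γ) : Kx (n := n) j * Kx (n := n) j = 1 := by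
  have : PresentedGroup.mk (necRels γ r n) ((FreeGroup.of (NECGen.x j)) ^ 2) = 1 :=
    necRel_eq_one (by left; left; left; left; exact ⟨j, rfl⟩)
  simpa [Kx, PresentedGroup.of, pow_two, map_mul] using this

end Aux

/-- The kernel `Δ̂ = ker θ` is generated, as a subgroup of `K`, by the
elements `δⱼ = τ₁ xⱼ` (1 ≤ j ≤ γ), `cₖ = τ₁ τ_{k+1}` (1 ≤ k ≤ r), `e₁ = e` and
`e₂ = τ₁ e τ₁`. -/
theorem necGroup_ker_generators (γ r : ℕ) (hγ : 1 ≤ γ) (hr : 1 ≤ r)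
    (n : Fin r → ℕ) (hn : ∀ k, 2 ≤ n k)
    (θ : NECGroup γ r n →* C₂)
    (hθx : ∀ j : Fin γ, θ (Kx j) = C₂a)
    (hθe : θ Ke = 1)
    (hθτ : ∀ k : Fin (r + 1), θ (Kτ k) = C₂a) :
    θ.ker = Subgroup.closure (
      (Set.range fun j : Fin γ => Kτ (0 : Fin (r + 1)) * Kx (n := n) j) ∪
      (Set.range fun k : Fin r => Kτ (0 : Fin (r + 1)) * Kτ (n := n) k.succ) ∪
      {Ke, Kτ (0 : Fin (r + 1)) * Ke * Kτ (0 : Fin (r + 1))}) := by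
  set t : NECGroup γ r n := Kτ (0 : Fin (r + 1)) with ht
  have ht2 : t * t = 1 := Kτ_sq 0
  have hti : t⁻¹ = t := inv_eq_of_mul_eq_one_right ht2
  set S : Set (NECGroup γ r n) :=
      (Set.range fun j : Fin γ => t * Kx (n := n) j) ∪
      (Set.range fun k : Fin r => t * Kτ (n := n) k.succ) ∪
      {Ke, t * Ke * t} with hS
  set H := Subgroup.closure S with hH
  have haa : C₂a * C₂a = 1 := by decide
  have hane : C₂a ≠ 1 := by decide
  have hmemx : ∀ j : Fin γ, t * Kx (n := n) j ∈ H := fun j =>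
    Subgroup.subset_closure (Or.inl (Or.inl ⟨j, rfl⟩))
  have hmemτ : ∀ k : Fin r, t * Kτ (n := n) k.succ ∈ H := fun k =>
    Subgroup.subset_closure (Or.inl (Or.inr ⟨k, rfl⟩))
  have hmeme : (Ke : NECGroup γ r n) ∈ H :=
    Subgroup.subset_closure (Or.inr (Or.inl rfl))
  have hmeme2 : t * Ke * t ∈ H :=
    Subgroup.subset_closure (Or.inr (Or.inr rfl))
  -- forward inclusion: S ⊆ ker θ
  have hSker : S ⊆ (θ.ker : Set (NECGroup γ r n)) := by
    rintro g hg
    rcases hg with (⟨j, hj⟩ | ⟨k, hk⟩) | hg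
    · rw [← hj]; simp [MonoidHom.mem_ker, map_mul, hθx, hθτ, haa, ht]
    · rw [← hk]; simp [MonoidHom.mem_ker, map_mul, hθτ, haa, ht]
    · rcases hg with rfl | hg
      · simpa [MonoidHom.mem_ker] using hθe
      · rcases hg with rfl
        simp [MonoidHom.mem_ker, map_mul, hθe, hθτ, haa, ht]
  -- conjugation by t preserves H
  have hconj : ∀ g ∈ H, t * g * t ∈ H := by
    intro g hg
    induction hg using Subgroup.closure_induction with
    | mem g hgS =>
      rcases hgS with (⟨j, hj⟩ | ⟨k, hk⟩) | hgS
      · rw [← hj]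
        have hx := Kx_sq (n := n) j
        have hxi : (Kx (n := n) j)⁻¹ = Kx j := inv_eq_of_mul_eq_one_right hx
        have : t * (t * Kx (n := n) j) * t = (t * Kx (n := n) j)⁻¹ := by
          rw [show (t * Kx (n := n) j)⁻¹ = (Kx (n := n) j)⁻¹ * t⁻¹ by group, hxi, hti,
            show t * (t * Kx (n := n) j) * t = (t * t) * (Kx j * t) by group, ht2, one_mul]
        rw [this]
        exact inv_mem (hmemx j)
      · rw [← hk]
        have hx := Kτ_sq (γ := γ) (n := n) k.succ
        have hxi : (Kτ (n := n) k.succ)⁻¹ = Kτ k.succ := inv_eq_of_mul_eq_one_right hx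
        have : t * (t * Kτ (n := n) k.succ) * t = (t * Kτ (n := n) k.succ)⁻¹ := by
          rw [show (t * Kτ (n := n) k.succ)⁻¹ = (Kτ (n := n) k.succ)⁻¹ * t⁻¹ by group, hxi, hti,
            show t * (t * Kτ (n := n) k.succ) * t = (t * t) * (Kτ k.succ * t) by group, ht2,
            one_mul]
        rw [this]
        exact inv_mem (hmemτ k)
      · rcases hgS with rfl | hgS
        · exact hmeme2
        · rcases hgS with rfl
          have : t * (t * Ke * t) * t = Ke := by
            rw [show t * (t * Ke * t) * t = (t * t) * Ke * (t * t) by group, ht2, one_mul, mul_one]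
          rw [this]
          exact hmeme
    | one => simpa [ht2] using one_mem H
    | mul a b _ _ iha ihb =>
      have : t * (a * b) * t = (t * a * t) * (t * b * t) := by
        rw [show (t * a * t) * (t * b * t) = t * a * (t * t) * (b * t) by group, ht2,
          show t * a * 1 * (b * t) = t * (a * b) * t by group]
      rw [this]; exact mul_mem iha ihb
    | inv a _ iha =>
      have : t * a⁻¹ * t = (t * a * t)⁻¹ := by
        rw [show (t * a * t)⁻¹ = t⁻¹ * a⁻¹ * t⁻¹ by group, hti]
      rw [this]; exact inv_mem iha
  -- main dichotomy
  have main : ∀ g : NECGroup γ r n,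
      (θ g = 1 ∧ g ∈ H) ∨ (θ g = C₂a ∧ t * g ∈ H) := by
    intro g
    have hg : g ∈ Subgroup.closure
        (Set.range (PresentedGroup.of : NECGen γ r → NECGroup γ r n)) := by
      rw [PresentedGroup.closure_range_of]; trivial
    induction hg using Subgroup.closure_induction with
    | mem g hgS =>
      obtain ⟨z, rfl⟩ := hgS
      cases z with
      | x j => exact Or.inr ⟨hθx j, hmemx j⟩
      | e => exact Or.inl ⟨hθe, hmeme⟩
      | τ k =>
        refine Or.inr ⟨hθτ k, ?_⟩
        rcases Fin.eq_zero_or_eq_succ k with rfl | ⟨k', rfl⟩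
        · rw [show t * (PresentedGroup.of (NECGen.τ 0) : NECGroup γ r n) = t * t from rfl, ht2]
          exact one_mem H
        · exact hmemτ k'
    | one => left; simpa using one_mem H
    | mul a b _ _ iha ihb =>
      rcases iha with ⟨ha1, ha2⟩ | ⟨ha1, ha2⟩ <;> rcases ihb with ⟨hb1, hb2⟩ | ⟨hb1, hb2⟩
      · left; exact ⟨by simp [map_mul, ha1, hb1], mul_mem ha2 hb2⟩
      · right
        refine ⟨by simp [map_mul, ha1, hb1], ?_⟩
        have : t * (a * b) = (t * a * t) * (t * b) := by
          rw [show (t * a * t) * (t * b) = t * a * (t * t) * b by group, ht2,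
            show t * a * 1 * b = t * (a * b) by group]
        rw [this]; exact mul_mem (hconj a ha2) hb2
      · right
        refine ⟨by simp [map_mul, ha1, hb1], ?_⟩
        rw [← mul_assoc]; exact mul_mem ha2 hb2
      · left
        refine ⟨by simp [map_mul, ha1, hb1, haa], ?_⟩
        have key : (t * (t * a) * t) * (t * b) = a * b := by
          rw [show (t * (t * a) * t) * (t * b) = (t * t) * a * (t * t) * b by group, ht2,
            show (1 : NECGroup γ r n) * a * 1 * b = a * b by group]
        rw [← key]
        exact mul_mem (hconj _ ha2) hb2
    | inv a _ iha =>
      rcases iha with ⟨ha1, ha2⟩ | ⟨ha1, ha2⟩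
      · left; exact ⟨by simp [ha1], inv_mem ha2⟩
      · right
        refine ⟨by simp [ha1]; decide, ?_⟩
        have key : t * a⁻¹ = t * (t * a)⁻¹ * t := by group
        rw [key]
        exact hconj _ (inv_mem ha2)
  refine le_antisymm ?_ ((Subgroup.closure_le _).mpr hSker)
  intro g hg
  rcases main g with ⟨_, h⟩ | ⟨h1, _⟩
  · exact h
  · exact absurd (hg ▸ h1 : (1 : C₂) = C₂a).symm hane
end

section
/- Let K be the NEC-type presented group with presentation ⟨x₁,…,x_γ, e, τ₁,…,τ_{r+1} ∣ x₁² = ⋯ = x_γ² = τ₁² = ⋯ = τ_{r+1}² = 1, e⁻¹τ_{r+1}e = τ₁, x_γ⋯x₂x₁e = 1, (τ₁τ₂)^{n₁} = ⋯ = (τ_rτ_{r+1})^{n_r} = 1⟩, let θ : K → C₂ be the homomorphism sending each x_j and each τ_k to a and e to 1, and let Δ̂ = ker θ. Then for every commutative group A, every group homomorphism ζ : Δ̂ → A, and every w ∈ Δ̂, one has ζ(τ₁wτ₁) = ζ(w)⁻¹; that is, conjugation by τ₁ induces the inversion automorphism on the image of ζ. -/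
/-!
Every generator of `K` other than `e` is an involution mapped to `a` by `θ`, and `e` is a
product of the `xⱼ`. Hence `Δ̂` is generated by the products `s τ₁` with `s` an involutory
generator: a word in involutions lies in `Δ̂` or in `Δ̂ τ₁` according to the parity of its length.
Conjugation by `τ₁` sends `s τ₁` to `τ₁ s = (s τ₁)⁻¹`, so `w ↦ ζ(τ₁ w τ₁) ζ(w)` is a homomorphism
to the abelian group `A` that is trivial on generators of `Δ̂`.
-/

namespace Subgroup

variable {G : Type*} [Group G] {S : Set G} {t : G}

theorem mem_closure_image_mul_right_or_mul_mem (hS : ∀ s ∈ S, s * s = 1) {w : G}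
    (hw : w ∈ closure S) :
    w ∈ closure ((· * t) '' S) ∨ w * t ∈ closure ((· * t) '' S) := by
  set H := closure ((· * t) '' S)
  have hst : ∀ s ∈ S, s * t ∈ H := fun s hs => subset_closure ⟨s, hs, rfl⟩
  have step : ∀ v s, s ∈ S → (v ∈ H ∨ v * t ∈ H) → v * s ∈ H ∨ v * s * t ∈ H := by
    rintro v s hs (hv | hvt)
    · exact .inr (mul_assoc v s t ▸ H.mul_mem hv (hst s hs))
    · have : v * s = v * t * (s * t)⁻¹ := by
        rw [mul_inv_rev, inv_eq_of_mul_eq_one_left (hS s hs)]; group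
      exact .inl (this ▸ H.mul_mem hvt (H.inv_mem (hst s hs)))
  induction hw using closure_induction_right with
  | one => exact .inl H.one_mem
  | mul_right v _ s hs ih => exact step v s hs ih
  | mul_inv_cancel v _ s hs ih =>
    rw [inv_eq_of_mul_eq_one_left (hS s hs)]
    exact step v s hs ih

theorem closure_image_mul_right_eq_ker {M : Type*} [MulOneClass M] (θ : G →* M)
    (hS : ∀ s ∈ S, s * s = 1) (hgen : closure S = ⊤) (hθS : ∀ s ∈ S, θ (s * t) = 1)
    (hθt : θ t ≠ 1) : closure ((· * t) '' S) = θ.ker := by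
  have hle : closure ((· * t) '' S) ≤ θ.ker := closure_le _ |>.mpr <| by
    rintro _ ⟨s, hs, rfl⟩
    exact hθS s hs
  refine le_antisymm hle fun w hw => ?_
  refine (mem_closure_image_mul_right_or_mul_mem hS (hgen ▸ mem_top w)).resolve_right
    fun hwt => hθt ?_
  have := hle hwt
  rwa [MonoidHom.mem_ker, map_mul, hw, one_mul] at this

end Subgroup

theorem MonoidHom.map_conjNormal_eq_inv {G A : Type*} [Group G] [CommGroup A] {N : Subgroup G}
    [N.Normal] (ζ : N →* A) {T : Set G} (hN : Subgroup.closure T = N) {t : G}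
    (hT : ∀ s ∈ T, t * s * t⁻¹ = s⁻¹) (w : N) : ζ (MulAut.conjNormal t w) = (ζ w)⁻¹ := by
  let F : N →* A := ζ.comp (MulAut.conjNormal t).toMonoidHom * ζ
  have hTF : T ≤ F.ker.map N.subtype := fun s hs => by
    have hsN : s ∈ N := hN ▸ Subgroup.subset_closure hs
    refine ⟨⟨s, hsN⟩, ?_, rfl⟩
    have : MulAut.conjNormal t ⟨s, hsN⟩ = (⟨s, hsN⟩ : N)⁻¹ := Subtype.ext (hT s hs)
    simp [F, this]
  obtain ⟨v, hv, hvw⟩ := (hN ▸ (Subgroup.closure_le _).mpr hTF : N ≤ _) w.2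
  rw [Subtype.val_injective hvw] at hv
  exact eq_inv_of_mul_eq_one_left hv

theorem MonoidHom.map_conjNormal_ker_eq_inv {G M A : Type*} [Group G] [MulOneClass M]
    [CommGroup A] {θ : G →* M} {S : Set G} {t : G} (hS : ∀ s ∈ S, s * s = 1)
    (hgen : Subgroup.closure S = ⊤) (ht : t * t = 1) (hθS : ∀ s ∈ S, θ (s * t) = 1)
    (hθt : θ t ≠ 1) (ζ : θ.ker →* A) (w : θ.ker) :
    ζ (MulAut.conjNormal t w) = (ζ w)⁻¹ := by
  refine ζ.map_conjNormal_eq_inv (Subgroup.closure_image_mul_right_eq_ker θ hS hgen hθS hθt) ?_ w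
  rintro _ ⟨s, hs, rfl⟩
  calc t * (s * t) * t⁻¹ = t * s := by group
    _ = t⁻¹ * s⁻¹ := by
      rw [inv_eq_of_mul_eq_one_left ht, inv_eq_of_mul_eq_one_left (hS s hs)]
    _ = (s * t)⁻¹ := (mul_inv_rev s t).symm

section NECGroup

variable {γ r : ℕ} {n : Fin r → ℕ}

theorem Kx_mul_self (j : Fin γ) : (Kx j : NECGroup γ r n) * Kx j = 1 := by
  have h := PresentedGroup.one_of_mem (rels := necRels γ r n)
    (.inl <| .inl <| .inl <| .inl ⟨j, rfl⟩)
  rwa [map_pow, sq] at h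

theorem Kτ_mul_self (k : Fin (r + 1)) : (Kτ k : NECGroup γ r n) * Kτ k = 1 := by
  have h := PresentedGroup.one_of_mem (rels := necRels γ r n)
    (.inl <| .inl <| .inl <| .inr ⟨k, rfl⟩)
  rwa [map_pow, sq] at h

theorem Ke_eq_inv_prod :
    (Ke : NECGroup γ r n) = (List.ofFn fun j : Fin γ => (Kx j.rev : NECGroup γ r n)).prod⁻¹ := by
  refine eq_inv_of_mul_eq_one_right ?_
  have h := PresentedGroup.one_of_mem (rels := necRels γ r n) (.inl <| .inr rfl)
  rwa [map_mul, map_list_prod, List.map_ofFn] at h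

theorem closure_range_Kx_union_range_Kτ :
    Subgroup.closure (Set.range Kx ∪ Set.range Kτ) = (⊤ : Subgroup (NECGroup γ r n)) := by
  set H := Subgroup.closure (Set.range Kx ∪ Set.range (Kτ : _ → NECGroup γ r n))
  have hx : ∀ j, Kx j ∈ H := fun j => Subgroup.subset_closure (.inl ⟨j, rfl⟩)
  rw [eq_top_iff, ← PresentedGroup.closure_range_of, Subgroup.closure_le]
  rintro _ ⟨_ | _ | k, rfl⟩
  · exact hx _
  · rw [← Ke, Ke_eq_inv_prod]
    refine H.inv_mem (H.list_prod_mem fun g hg => ?_)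
    obtain ⟨j, rfl⟩ := List.mem_ofFn.mp hg
    exact hx _
  · exact Subgroup.subset_closure (.inr ⟨k, rfl⟩)

end NECGroup

theorem necGroup_conj_tau_induces_inversion_general (γ r : ℕ)
    (n : Fin r → ℕ)
    (θ : NECGroup γ r n →* C₂)
    (hθx : ∀ j : Fin γ, θ (Kx j) = C₂a)
    (hθτ : ∀ k : Fin (r + 1), θ (Kτ k) = C₂a)
    {A : Type*} [CommGroup A] (ζ : θ.ker →* A) :
    ∀ w : NECGroup γ r n, ∀ hw : w ∈ θ.ker,
      ∀ hw' : Kτ (0 : Fin (r + 1)) * w * Kτ (0 : Fin (r + 1)) ∈ θ.ker,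
        ζ ⟨Kτ (0 : Fin (r + 1)) * w * Kτ (0 : Fin (r + 1)), hw'⟩ = (ζ ⟨w, hw⟩)⁻¹ := by
  intro w hw hw'
  let S : Set (NECGroup γ r n) := Set.range Kx ∪ Set.range Kτ
  have hS : ∀ s ∈ S, s * s = 1 := by
    rintro _ (⟨j, rfl⟩ | ⟨k, rfl⟩)
    exacts [Kx_mul_self j, Kτ_mul_self k]
  have hθS : ∀ s ∈ S, θ (s * Kτ 0) = 1 := by
    rintro _ (⟨j, rfl⟩ | ⟨k, rfl⟩) <;> simp only [map_mul, hθx, hθτ] <;> decide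
  have hθt : θ (Kτ 0) ≠ 1 := by rw [hθτ]; decide
  have hw_conj : MulAut.conjNormal (Kτ 0) ⟨w, hw⟩ = ⟨Kτ 0 * w * Kτ 0, hw'⟩ :=
    Subtype.ext (by simp [inv_eq_of_mul_eq_one_left (Kτ_mul_self 0)])
  rw [← hw_conj]
  exact θ.map_conjNormal_ker_eq_inv hS closure_range_Kx_union_range_Kτ (Kτ_mul_self 0) hθS hθt
    ζ ⟨w, hw⟩

/-- With `Δ̂ = ker θ ≤ K`, for every commutative group `A`, every
homomorphism `ζ : Δ̂ → A` and every `w ∈ Δ̂`, one has `ζ(τ₁ w τ₁) = ζ(w)⁻¹`; that is,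
conjugation by `τ₁` induces the inversion automorphism on the image of `ζ`. -/
theorem necGroup_conj_tau_induces_inversion (γ r : ℕ) (hγ : 1 ≤ γ) (hr : 1 ≤ r)
    (n : Fin r → ℕ) (hn : ∀ k, 2 ≤ n k)
    (θ : NECGroup γ r n →* C₂)
    (hθx : ∀ j : Fin γ, θ (Kx j) = C₂a)
    (hθe : θ Ke = 1)
    (hθτ : ∀ k : Fin (r + 1), θ (Kτ k) = C₂a)
    {A : Type*} [CommGroup A] (ζ : θ.ker →* A) :
    ∀ w : NECGroup γ r n, ∀ hw : w ∈ θ.ker,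
      ∀ hw' : Kτ (0 : Fin (r + 1)) * w * Kτ (0 : Fin (r + 1)) ∈ θ.ker,
        ζ ⟨Kτ (0 : Fin (r + 1)) * w * Kτ (0 : Fin (r + 1)), hw'⟩ = (ζ ⟨w, hw⟩)⁻¹ :=
  necGroup_conj_tau_induces_inversion_general γ r n θ hθx hθτ ζ
end
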